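/- arXiv:1011.3907 — 4 statements merged into one kernel-verified Lean document; each statement's English description precedes it below -/
import Mathlib

section
/- (Lemma 1) Let a ∈ ℂ, R > 0, let g be a holomorphic function on an open neighborhood of the closed disc B̄(a,R), and let v = Re g. Assume v(z) ≥ 0 for all z ∈ B̄(a,R) and v(z₁) = 0 for some point z₁ ∈ ∂B(a,R). Then v(a) ≤ 2R·|g′(z₁)|, i.e., v(a) ≤ 2R·|∇v(z₁)|. -/
/-!
We may assume `v(a) > 0`. The Möbius map `w ↦ (w - g(a)) / (w + conj g(a))` sends the closed
right half-plane into the closed unit disc, `g(a)` to `0` and the imaginary axis to the unit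
circle, so its composite `h` with `g` maps `B(a,R)` into the unit disc with `h(a) = 0` and
`|h(z₁)| = 1`. The Schwarz lemma along the radius to `z₁` forces `|h'(z₁)| ≥ 1/R`, while
`h'(z₁) = 2 v(a) g'(z₁) / (g(z₁) + conj g(a))²` and the denominator has modulus at least `v(a)`.
-/

open Metric Filter Topology Set ComplexConjugate

theorem le_norm_of_hasDerivWithinAt_Iio {E : Type*} [NormedAddCommGroup E] [NormedSpace ℝ E]
    {φ : ℝ → E} {φ' : E} {x C : ℝ} (hφ : HasDerivWithinAt φ φ' (Iio x) x)
    (hC : ∀ᶠ t in 𝓝[<] x, C * (x - t) ≤ ‖φ x - φ t‖) : C ≤ ‖φ'‖ := by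
  have hslope : Tendsto (slope φ x) (𝓝[<] x) (𝓝 φ') := by
    simpa using hasDerivWithinAt_iff_tendsto_slope.1 hφ
  refine ge_of_tendsto hslope.norm ?_
  filter_upwards [hC, self_mem_nhdsWithin] with t ht htx
  have hxt : 0 < x - t := sub_pos.2 htx
  rwa [slope_def_module, norm_smul, norm_inv, norm_sub_rev, Real.norm_eq_abs,
    abs_of_pos hxt, norm_sub_rev, le_inv_mul_iff₀ hxt, mul_comm]

namespace Complex

variable {E : Type*} [NormedAddCommGroup E] [NormedSpace ℂ E] {f : ℂ → E} {c z : ℂ}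
  {R₁ R₂ : ℝ}

theorem le_mul_norm_deriv_of_mapsTo_ball_of_mem_sphere (hd : DifferentiableOn ℂ f (ball c R₁))
    (h_maps : MapsTo f (ball c R₁) (closedBall (f c) R₂)) (hR₁ : 0 < R₁)
    (hz : z ∈ sphere c R₁) (hdz : DifferentiableAt ℂ f z) (hfz : dist (f z) (f c) = R₂) :
    R₂ ≤ R₁ * ‖deriv f z‖ := by
  have hzc : dist z c = R₁ := mem_sphere.1 hz
  have hradial : HasDerivAt (f ∘ AffineMap.lineMap c z) ((z - c) • deriv f z) (1 : ℝ) :=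
    HasDerivAt.scomp (1 : ℝ) (by simpa using hdz.hasDerivAt) AffineMap.hasDerivAt_lineMap
  calc R₂ ≤ ‖(z - c) • deriv f z‖ := by
        refine le_norm_of_hasDerivWithinAt_Iio hradial.hasDerivWithinAt ?_
        filter_upwards [Ioo_mem_nhdsLT zero_lt_one] with t ⟨ht₀, ht₁⟩
        have hdist : dist (AffineMap.lineMap c z t) c = t * R₁ := by
          rw [dist_lineMap_left, Real.norm_eq_abs, abs_of_pos ht₀, dist_comm, hzc]
        have hmem : AffineMap.lineMap c z t ∈ ball c R₁ := by
          rw [mem_ball, hdist]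
          exact mul_lt_of_lt_one_left hR₁ ht₁
        have hschwarz := dist_le_div_mul_dist_of_mapsTo_ball hd h_maps hmem
        rw [hdist, show R₂ / R₁ * (t * R₁) = R₂ * t by field_simp] at hschwarz
        have htri := dist_triangle (f z) (f (AffineMap.lineMap c z t)) (f c)
        simp only [Function.comp_apply, AffineMap.lineMap_apply_one, ← dist_eq_norm]
        linarith
    _ = R₁ * ‖deriv f z‖ := by rw [norm_smul, ← dist_eq_norm, hzc]

noncomputable def halfPlaneToDisc (p w : ℂ) : ℂ := (w - p) / (w + conj p)

theorem halfPlaneToDisc_self (p : ℂ) : halfPlaneToDisc p p = 0 := by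
  simp [halfPlaneToDisc]

theorem normSq_add_conj_sub_normSq_sub (p w : ℂ) :
    normSq (w + conj p) - normSq (w - p) = 4 * w.re * p.re := by
  simp only [normSq_apply, add_re, add_im, sub_re, sub_im, conj_re, conj_im]
  ring

theorem add_conj_ne_zero {p w : ℂ} (hp : 0 < p.re) (hw : 0 ≤ w.re) : w + conj p ≠ 0 := by
  intro h
  have := congrArg re h
  simp only [add_re, conj_re, zero_re] at this
  linarith

theorem norm_halfPlaneToDisc_le_one {p w : ℂ} (hp : 0 < p.re) (hw : 0 ≤ w.re) :
    ‖halfPlaneToDisc p w‖ ≤ 1 := by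
  rw [halfPlaneToDisc, norm_div, div_le_one (norm_pos_iff.2 (add_conj_ne_zero hp hw)),
    norm_def, norm_def]
  refine Real.sqrt_le_sqrt ?_
  nlinarith [normSq_add_conj_sub_normSq_sub p w]

theorem norm_halfPlaneToDisc_eq_one {p w : ℂ} (hp : 0 < p.re) (hw : w.re = 0) :
    ‖halfPlaneToDisc p w‖ = 1 := by
  rw [halfPlaneToDisc, norm_div, div_eq_one_iff_eq (norm_ne_zero_iff.2 (add_conj_ne_zero hp hw.ge)),
    norm_def, norm_def]
  have h := normSq_add_conj_sub_normSq_sub p w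
  rw [hw] at h
  congr 1
  linarith

theorem hasDerivAt_halfPlaneToDisc {p w : ℂ} (hp : 0 < p.re) (hw : 0 ≤ w.re) :
    HasDerivAt (halfPlaneToDisc p) (2 * p.re / (w + conj p) ^ 2) w := by
  refine (((hasDerivAt_id' w).sub_const p).div ((hasDerivAt_id' w).add_const (conj p))
    (add_conj_ne_zero hp hw)).congr_deriv ?_
  rw [show (2 * p.re : ℂ) = p + conj p by rw [add_conj]; push_cast; ring]
  ring

theorem norm_deriv_halfPlaneToDisc_le {p w : ℂ} (hp : 0 < p.re) (hw : 0 ≤ w.re) :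
    ‖deriv (halfPlaneToDisc p) w‖ ≤ 2 / p.re := by
  have hre : p.re ≤ ‖w + conj p‖ := by
    calc p.re ≤ (w + conj p).re := by simp only [add_re, conj_re]; linarith
      _ ≤ ‖w + conj p‖ := re_le_norm _
  rw [(hasDerivAt_halfPlaneToDisc hp hw).deriv, norm_div, norm_pow, norm_mul, Complex.norm_two,
    norm_real, Real.norm_of_nonneg hp.le, div_le_div_iff₀ (pow_pos (hp.trans_le hre) 2) hp]
  nlinarith

end Complex

open Complex

/-- Lemma 1: if `v = Re g` is a nonnegative harmonic function on the closed disc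
`B̄(a,R)` (with `g` holomorphic on a neighborhood) and `v(z₁) = 0` at some boundary
point `z₁`, then `v(a) ≤ 2R |∇v(z₁)| = 2R |g′(z₁)|`. -/
theorem nonneg_harmonic_boundary_zero_gradient_bound
    (a : ℂ) (R : ℝ) (hR : 0 < R) (U : Set ℂ) (hU : IsOpen U)
    (hUR : closedBall a R ⊆ U) (g : ℂ → ℂ) (hg : DifferentiableOn ℂ g U)
    (hpos : ∀ z ∈ closedBall a R, 0 ≤ (g z).re)
    (z₁ : ℂ) (hz₁ : z₁ ∈ sphere a R) (hz₁0 : (g z₁).re = 0) :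
    (g a).re ≤ 2 * R * ‖deriv g z₁‖ := by
  rcases le_or_gt (g a).re 0 with hα | hα
  · exact hα.trans (by positivity)
  set h := halfPlaneToDisc (g a) ∘ g
  have hz₁_mem : z₁ ∈ closedBall a R := sphere_subset_closedBall hz₁
  have hh : ∀ z ∈ closedBall a R,
      HasDerivAt h (deriv (halfPlaneToDisc (g a)) (g z) * deriv g z) z := fun z hz =>
    (hasDerivAt_halfPlaneToDisc hα (hpos z hz)).differentiableAt.hasDerivAt.comp z
      (hg.differentiableAt (hU.mem_nhds (hUR hz))).hasDerivAt
  have h_maps : MapsTo h (ball a R) (closedBall (h a) 1) := fun z hz => by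
    simpa [h, halfPlaneToDisc_self] using
      norm_halfPlaneToDisc_le_one hα (hpos z (ball_subset_closedBall hz))
  have hboundary : 1 ≤ R * ‖deriv h z₁‖ :=
    le_mul_norm_deriv_of_mapsTo_ball_of_mem_sphere
      (fun z hz => (hh z (ball_subset_closedBall hz)).differentiableAt.differentiableWithinAt)
      h_maps hR hz₁ (hh z₁ hz₁_mem).differentiableAt
      (by simp [h, halfPlaneToDisc_self, norm_halfPlaneToDisc_eq_one hα hz₁0])
  have hderiv : ‖deriv h z₁‖ ≤ 2 / (g a).re * ‖deriv g z₁‖ := by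
    rw [(hh z₁ hz₁_mem).deriv, norm_mul]
    gcongr
    exact norm_deriv_halfPlaneToDisc_le hα (hpos z₁ hz₁_mem)
  calc (g a).re ≤ (g a).re * (R * (2 / (g a).re * ‖deriv g z₁‖)) :=
        le_mul_of_one_le_right hα.le (hboundary.trans (by gcongr))
    _ = 2 * R * ‖deriv g z₁‖ := by field_simp
end

section
/- (Lemma 2, Green potential form) Let μ be a finite Borel measure on the open unit disc B(0,1) ⊂ ℂ, and let w(z) = ∫_{B(0,1)} (log|1 − conj(ζ)·z| − log|z − ζ|) dμ(ζ) be its Green potential, so w ≥ 0 on the closed unit disc and w = 0 on the unit circle. Let v : B̄(0,1) → ℝ be a function with v ≥ w on B̄(0,1), let z₁ be a point with |z₁| = 1 such that v(z₁) = 0, and assume v is differentiable at z₁ (as a function on a neighborhood of z₁ in ℂ). Then |∇v(z₁)| ≥ (1/3)·μ(B̄(0,1/2)). -/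
open MeasureTheory Metric Set Filter Topology
open scoped RealInnerProductSpace

/-!
Put `G(z, ζ) = log |1 - ζ̄ z| - log |z - ζ|`. From `|1 - ζ̄ z|² - |z - ζ|² = (1 - |z|²)(1 - |ζ|²)`
one gets `G(z, ζ) ≥ 0`, and `G(z, ζ) ≥ (1 - |z|²)/6` when `|ζ| ≤ 1/2`. Hence along the radius
`r ↦ r z₁` we have `v(r z₁) ≥ w(r z₁) ≥ (1 - r)(1 + r)/6 · μ(B̄(0,1/2))`, and as `v(z₁) = 0` the
radial derivative of `v` at `z₁` is at most `-μ(B̄(0,1/2))/3`.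

The lower bound on `w(r z₁)` needs `G(r z₁, ·)` to be `μ`-integrable and `r z₁` not to be an atom
of `μ`. By Tonelli, `∫ -log |r z₁ - ζ| dr` is bounded uniformly in `ζ`, so both hold for almost
every `r`, and the difference quotients may be taken along such `r` only.
-/

noncomputable def greenKernel (z ζ : ℂ) : ℝ :=
  Real.log ‖1 - (starRingEnd ℂ) ζ * z‖ - Real.log ‖z - ζ‖

lemma norm_one_sub_conj_mul_sq_sub_norm_sub_sq (z ζ : ℂ) :
    ‖1 - (starRingEnd ℂ) ζ * z‖ ^ 2 - ‖z - ζ‖ ^ 2 = (1 - ‖z‖ ^ 2) * (1 - ‖ζ‖ ^ 2) := by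
  simp only [Complex.sq_norm, Complex.normSq_apply, Complex.sub_re, Complex.sub_im,
    Complex.mul_re, Complex.mul_im, Complex.one_re, Complex.one_im, Complex.conj_re,
    Complex.conj_im]
  ring

lemma norm_sub_le_norm_one_sub_conj_mul {z ζ : ℂ} (hz : ‖z‖ ≤ 1) (hζ : ‖ζ‖ ≤ 1) :
    ‖z - ζ‖ ≤ ‖1 - (starRingEnd ℂ) ζ * z‖ := by
  have h := norm_one_sub_conj_mul_sq_sub_norm_sub_sq z ζ
  have : 0 ≤ (1 - ‖z‖ ^ 2) * (1 - ‖ζ‖ ^ 2) :=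
    mul_nonneg (by nlinarith [norm_nonneg z]) (by nlinarith [norm_nonneg ζ])
  exact pow_le_pow_iff_left₀ (norm_nonneg _) (norm_nonneg _) two_ne_zero |>.1 (by linarith)

/-- With `A = |1 - ζ̄ z|` and `B = |z - ζ|`: `log (A / B) ≥ 1 - B / A = (A² - B²) / (A (A + B))`. -/
lemma greenKernel_ge {z ζ : ℂ} (hz : ‖z‖ ≤ 1) (hζ : ‖ζ‖ ≤ 1) (hne : z ≠ ζ) :
    (1 - ‖z‖ ^ 2) * (1 - ‖ζ‖ ^ 2) / (2 * ‖1 - (starRingEnd ℂ) ζ * z‖ ^ 2) ≤ greenKernel z ζ := by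
  rw [← norm_one_sub_conj_mul_sq_sub_norm_sub_sq]
  set A := ‖1 - (starRingEnd ℂ) ζ * z‖
  set B := ‖z - ζ‖
  have hB : 0 < B := norm_pos_iff.2 (sub_ne_zero.2 hne)
  have hBA : B ≤ A := norm_sub_le_norm_one_sub_conj_mul hz hζ
  have hA : 0 < A := hB.trans_le hBA
  have hlog : 1 - B / A ≤ greenKernel z ζ := by
    have := Real.one_sub_inv_le_log_of_pos (div_pos hA hB)
    rwa [inv_div, Real.log_div hA.ne' hB.ne'] at this
  refine le_trans ?_ hlog
  rw [show 1 - B / A = (A - B) / A by field_simp, div_le_div_iff₀ (by positivity) hA]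
  nlinarith [mul_le_mul_of_nonneg_left hBA (sub_nonneg.2 hBA)]

lemma greenKernel_nonneg {z ζ : ℂ} (hz : ‖z‖ ≤ 1) (hζ : ‖ζ‖ ≤ 1) (hne : z ≠ ζ) :
    0 ≤ greenKernel z ζ :=
  (div_nonneg (mul_nonneg (by nlinarith [norm_nonneg z]) (by nlinarith [norm_nonneg ζ]))
    (by positivity)).trans (greenKernel_ge hz hζ hne)

lemma greenKernel_ge_of_norm_le_half {z ζ : ℂ} (hz : ‖z‖ ≤ 1) (hζ : ‖ζ‖ ≤ 1 / 2) (hne : z ≠ ζ) :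
    (1 - ‖z‖ ^ 2) / 6 ≤ greenKernel z ζ := by
  refine le_trans ?_ (greenKernel_ge hz (hζ.trans (by norm_num)) hne)
  have hprod : ‖(starRingEnd ℂ) ζ * z‖ ≤ 1 / 2 := by
    rw [norm_mul, Complex.norm_conj]
    nlinarith [norm_nonneg z, norm_nonneg ζ]
  have hA₁ : 1 / 2 ≤ ‖1 - (starRingEnd ℂ) ζ * z‖ := by
    have := norm_sub_norm_le (1 : ℂ) ((starRingEnd ℂ) ζ * z)
    rw [norm_one] at this
    linarith
  have hA₂ : ‖1 - (starRingEnd ℂ) ζ * z‖ ≤ 3 / 2 := by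
    have := norm_sub_le (1 : ℂ) ((starRingEnd ℂ) ζ * z)
    rw [norm_one] at this
    linarith
  have hz₂ : 0 ≤ 1 - ‖z‖ ^ 2 := by nlinarith [norm_nonneg z]
  have hζ₂ : 3 / 4 ≤ 1 - ‖ζ‖ ^ 2 := by nlinarith [norm_nonneg ζ]
  rw [div_le_div_iff₀ (by norm_num) (by positivity)]
  nlinarith [mul_le_mul_of_nonneg_left hζ₂ hz₂, mul_le_mul hA₂ hA₂ (by positivity) (by norm_num)]

lemma measurable_greenKernel (z : ℂ) : Measurable (greenKernel z) := by
  unfold greenKernel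
  fun_prop

section Integral

variable {μ : Measure ℂ} [IsFiniteMeasure μ] {z : ℂ}

lemma integrable_greenKernel (hμ : ∀ᵐ ζ ∂μ, ‖ζ‖ ≤ 1) (hz : ‖z‖ ≤ 1) (hz₀ : μ {z} = 0)
    (hlog : ∫⁻ ζ, ENNReal.ofReal (-Real.log ‖z - ζ‖) ∂μ ≠ ⊤) :
    Integrable (greenKernel z) μ := by
  have hne : ∀ᵐ ζ ∂μ, ζ ∉ ({z} : Set ℂ) := measure_eq_zero_iff_ae_notMem.1 hz₀
  have hG : ∀ᵐ ζ ∂μ, 0 ≤ greenKernel z ζ ∧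
      greenKernel z ζ ≤ Real.log 2 + -Real.log ‖z - ζ‖ := by
    filter_upwards [hμ, hne] with ζ hζ hζz
    have hζz : z ≠ ζ := Ne.symm hζz
    have hA : 0 < ‖1 - (starRingEnd ℂ) ζ * z‖ :=
      (norm_pos_iff.2 (sub_ne_zero.2 hζz)).trans_le (norm_sub_le_norm_one_sub_conj_mul hz hζ)
    have hA₂ : Real.log ‖1 - (starRingEnd ℂ) ζ * z‖ ≤ Real.log 2 := by
      refine Real.log_le_log hA ((norm_sub_le _ _).trans ?_)
      rw [norm_one, norm_mul, Complex.norm_conj]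
      nlinarith [norm_nonneg z, norm_nonneg ζ]
    exact ⟨greenKernel_nonneg hz hζ hζz, by unfold greenKernel; linarith⟩
  refine ⟨(measurable_greenKernel z).aestronglyMeasurable, ?_⟩
  rw [hasFiniteIntegral_iff_ofReal (hG.mono fun _ h ↦ h.1)]
  calc ∫⁻ ζ, ENNReal.ofReal (greenKernel z ζ) ∂μ
      ≤ ∫⁻ ζ, ENNReal.ofReal (Real.log 2) + ENNReal.ofReal (-Real.log ‖z - ζ‖) ∂μ :=
        lintegral_mono_ae <| hG.mono fun _ h ↦
          (ENNReal.ofReal_le_ofReal h.2).trans (ENNReal.ofReal_add_le)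
    _ = ENNReal.ofReal (Real.log 2) * μ univ + ∫⁻ ζ, ENNReal.ofReal (-Real.log ‖z - ζ‖) ∂μ := by
        rw [lintegral_add_left measurable_const, lintegral_const]
    _ < ⊤ := ENNReal.add_lt_top.2 ⟨by finiteness, hlog.lt_top⟩

lemma integral_greenKernel_ge (hμ : ∀ᵐ ζ ∂μ, ‖ζ‖ ≤ 1) (hz : ‖z‖ ≤ 1) (hz₀ : μ {z} = 0)
    (hlog : ∫⁻ ζ, ENNReal.ofReal (-Real.log ‖z - ζ‖) ∂μ ≠ ⊤) :
    (1 - ‖z‖ ^ 2) / 6 * μ.real (closedBall 0 (1 / 2)) ≤ ∫ ζ, greenKernel z ζ ∂μ := by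
  have hne : ∀ᵐ ζ ∂μ, ζ ∉ ({z} : Set ℂ) := measure_eq_zero_iff_ae_notMem.1 hz₀
  calc (1 - ‖z‖ ^ 2) / 6 * μ.real (closedBall 0 (1 / 2))
      = ∫ ζ, (closedBall (0 : ℂ) (1 / 2)).indicator (fun _ ↦ (1 - ‖z‖ ^ 2) / 6) ζ ∂μ := by
        rw [integral_indicator_const _ measurableSet_closedBall, smul_eq_mul, mul_comm]
    _ ≤ ∫ ζ, greenKernel z ζ ∂μ := by
        refine integral_mono_ae ((integrable_const _).indicator measurableSet_closedBall)
          (integrable_greenKernel hμ hz hz₀ hlog) ?_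
        filter_upwards [hμ, hne] with ζ hζ hζz
        have hζz : z ≠ ζ := Ne.symm hζz
        by_cases hζK : ζ ∈ closedBall (0 : ℂ) (1 / 2)
        · rw [indicator_of_mem hζK]
          exact greenKernel_ge_of_norm_le_half hz (mem_closedBall_zero_iff.1 hζK) hζz
        · rw [indicator_of_notMem hζK]
          exact greenKernel_nonneg hz hζ hζz

end Integral

lemma lintegral_ofReal_neg_log_abs_ne_top :
    ∫⁻ s : ℝ, ENNReal.ofReal (-Real.log |s|) ≠ ⊤ := by
  have hsupp : (fun s : ℝ ↦ ENNReal.ofReal (-Real.log |s|)).support ⊆ Icc (-1) 1 := by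
    intro s hs
    by_contra hs₁
    have h1 : 1 ≤ |s| := not_lt.1 fun h ↦ hs₁ (abs_le.1 h.le)
    exact hs (ENNReal.ofReal_eq_zero.2 (neg_nonpos.2 (Real.log_nonneg h1)))
  rw [← setLIntegral_eq_of_support_subset hsupp]
  have hlog : IntegrableOn Real.log (Icc (-1 : ℝ) 1) :=
    (intervalIntegrable_iff_integrableOn_Icc_of_le (by norm_num)).1
      intervalIntegral.intervalIntegrable_log'
  simpa only [Real.log_abs, Pi.neg_apply] using hlog.neg.setLIntegral_lt_top.ne

section InnerProductSpace

variable {E : Type*} [NormedAddCommGroup E] [InnerProductSpace ℝ E] {u : E}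

lemma abs_sub_inner_le_norm_smul_sub (hu : ‖u‖ = 1) (r : ℝ) (ζ : E) :
    |r - ⟪u, ζ⟫| ≤ ‖r • u - ζ‖ := by
  have h := abs_real_inner_le_norm u (r • u - ζ)
  rwa [inner_sub_right, real_inner_smul_right, real_inner_self_eq_norm_sq, hu, one_pow, mul_one,
    one_mul] at h

lemma lintegral_ofReal_neg_log_norm_smul_sub_le (hu : ‖u‖ = 1) (ζ : E) :
    ∫⁻ r : ℝ, ENNReal.ofReal (-Real.log ‖r • u - ζ‖)
      ≤ ∫⁻ s : ℝ, ENNReal.ofReal (-Real.log |s|) := by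
  rw [← lintegral_sub_right_eq_self (fun s : ℝ ↦ ENNReal.ofReal (-Real.log |s|)) ⟪u, ζ⟫]
  refine lintegral_mono_ae ?_
  filter_upwards [measure_eq_zero_iff_ae_notMem.1 (Real.volume_singleton (a := ⟪u, ζ⟫))]
    with r hr
  have hpos : 0 < |r - ⟪u, ζ⟫| := abs_pos.2 (sub_ne_zero.2 hr)
  exact ENNReal.ofReal_le_ofReal
    (neg_le_neg (Real.log_le_log hpos (abs_sub_inner_le_norm_smul_sub hu r ζ)))

variable [MeasurableSpace E] [BorelSpace E] [SecondCountableTopology E]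

lemma ae_lintegral_ofReal_neg_log_norm_smul_sub_ne_top (μ : Measure E) [IsFiniteMeasure μ]
    (hu : ‖u‖ = 1) : ∀ᵐ r : ℝ, ∫⁻ ζ, ENNReal.ofReal (-Real.log ‖r • u - ζ‖) ∂μ ≠ ⊤ := by
  have hF : Measurable fun p : ℝ × E ↦ ENNReal.ofReal (-Real.log ‖p.1 • u - p.2‖) := by
    fun_prop
  refine (ae_lt_top hF.lintegral_prod_right' ?_).mono fun _ h ↦ h.ne
  rw [lintegral_lintegral_swap hF.aemeasurable]
  refine ne_top_of_le_ne_top (ENNReal.mul_ne_top lintegral_ofReal_neg_log_abs_ne_top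
    (measure_ne_top μ univ)) ?_
  rw [← lintegral_const]
  exact lintegral_mono fun ζ ↦ lintegral_ofReal_neg_log_norm_smul_sub_le hu ζ

end InnerProductSpace

lemma ae_measure_singleton_smul_eq_zero {E : Type*} [AddCommGroup E] [Module ℝ E]
    [MeasurableSpace E] [MeasurableSingletonClass E] [Module.IsTorsionFree ℝ E]
    (μ : Measure E) [SFinite μ] {u : E} (hu : u ≠ 0) : ∀ᵐ r : ℝ, μ {r • u} = 0 := by
  have hcount : {r : ℝ | 0 < μ {r • u}}.Countable :=
    Measure.countable_meas_pos_of_disjoint_iUnion (fun _ ↦ measurableSet_singleton _)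
      fun r s hrs ↦ disjoint_singleton.2 fun h ↦ hrs (smul_left_injective ℝ hu h)
  rw [ae_iff]
  simpa only [pos_iff_ne_zero] using hcount.measure_zero volume

lemma nhdsLT_inf_ae_volume_neBot (x : ℝ) : (𝓝[<] x ⊓ ae volume).NeBot := by
  refine inf_neBot_iff.2 fun s hs t ht ↦ ?_
  obtain ⟨l, hl, hls⟩ := mem_nhdsLT_iff_exists_Ioo_subset.1 hs
  by_contra hst
  have hnull : volume (Ioo l x) = 0 :=
    measure_mono_null (fun y hy hyt ↦ hst ⟨y, hls hy, hyt⟩) (mem_ae_iff.1 ht)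
  rw [Real.volume_Ioo, ENNReal.ofReal_eq_zero] at hnull
  linarith [mem_Iio.1 hl]

lemma le_neg_of_hasDerivWithinAt_Iio_of_ae_le {g f : ℝ → ℝ} {g' x : ℝ}
    (hg : HasDerivWithinAt g g' (Iio x) x) (hf : ContinuousWithinAt f (Iio x) x)
    (h : ∀ᶠ r in 𝓝[<] x ⊓ ae volume, (x - r) * f r ≤ g r - g x) : f x ≤ -g' := by
  have := nhdsLT_inf_ae_volume_neBot x
  have hslope := ((hasDerivWithinAt_iff_tendsto_slope' self_notMem_Iio).1 hg).neg
  refine le_of_tendsto_of_tendsto (b := 𝓝[<] x ⊓ ae volume) (hf.mono_left inf_le_left)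
    (hslope.mono_left inf_le_left) ?_
  filter_upwards [h, mem_inf_of_left self_mem_nhdsWithin] with r hr hrx
  have hxr : 0 < x - r := sub_pos.2 hrx
  rw [slope_def_field, ← neg_div, neg_sub, ← neg_div_neg_eq, neg_sub, neg_sub, le_div_iff₀ hxr]
  linarith

/-- Lemma 2 (Green potential form): if `w` is the Green potential of a finite measure
`μ` supported in the unit disc, `v ≥ w` on the closed unit disc, `v(z₁) = 0` at a point
`z₁` of the unit circle, and `v` is differentiable at `z₁`, then
`|∇v(z₁)| ≥ (1/3) μ(B̄(0,1/2))`. -/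
theorem green_potential_gradient_bound
    (μ : Measure ℂ) [IsFiniteMeasure μ] (hμ : μ (ball (0:ℂ) 1)ᶜ = 0)
    (w v : ℂ → ℝ)
    (hw : ∀ z : ℂ, w z = ∫ ζ, (Real.log (‖1 - (starRingEnd ℂ) ζ * z‖)
        - Real.log (‖z - ζ‖)) ∂μ)
    (hvw : ∀ z ∈ closedBall (0:ℂ) 1, w z ≤ v z)
    (z₁ : ℂ) (hz₁ : ‖z₁‖ = 1) (hv₁ : v z₁ = 0)
    (hv : DifferentiableAt ℝ v z₁) :
    (1 / 3) * (μ (closedBall (0:ℂ) (1 / 2))).toReal ≤ ‖fderiv ℝ v z₁‖ := by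
  set c := μ.real (closedBall (0 : ℂ) (1 / 2))
  have hsupp : ∀ᵐ ζ ∂μ, ‖ζ‖ ≤ 1 := by
    filter_upwards [measure_eq_zero_iff_ae_notMem.1 hμ] with ζ hζ
    exact (mem_ball_zero_iff.1 (not_not.1 hζ)).le
  have hg : HasDerivAt (fun r : ℝ ↦ v (r • z₁)) (fderiv ℝ v z₁ z₁) 1 := by
    have h := hv.hasFDerivAt.comp_hasDerivAt_of_eq (1 : ℝ)
      ((hasDerivAt_id' (1 : ℝ)).smul_const z₁) (one_smul ℝ z₁).symm
    rwa [one_smul] at h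
  have hlower : ∀ᶠ r in 𝓝[<] 1 ⊓ ae volume,
      (1 - r) * ((1 + r) / 6 * c) ≤ v (r • z₁) - v ((1 : ℝ) • z₁) := by
    filter_upwards [mem_inf_of_left (Ioo_mem_nhdsLT (zero_lt_one' ℝ)),
      mem_inf_of_right (ae_lintegral_ofReal_neg_log_norm_smul_sub_ne_top μ hz₁),
      mem_inf_of_right
        (ae_measure_singleton_smul_eq_zero μ (norm_ne_zero_iff.1 (hz₁ ▸ one_ne_zero)))]
      with r ⟨hr₀, hr₁⟩ hlog hatom
    have hnorm : ‖r • z₁‖ = r := by rw [norm_smul, hz₁, mul_one, Real.norm_of_nonneg hr₀.le]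
    have hr : ‖r • z₁‖ ≤ 1 := hnorm.trans_le hr₁.le
    calc (1 - r) * ((1 + r) / 6 * c) = (1 - ‖r • z₁‖ ^ 2) / 6 * c := by rw [hnorm]; ring
      _ ≤ w (r • z₁) := (integral_greenKernel_ge hsupp hr hatom hlog).trans_eq (hw _).symm
      _ ≤ v (r • z₁) := hvw _ (mem_closedBall_zero_iff.2 hr)
      _ = v (r • z₁) - v ((1 : ℝ) • z₁) := by rw [one_smul, hv₁, sub_zero]
  calc 1 / 3 * c = (1 + 1) / 6 * c := by ring
    _ ≤ -fderiv ℝ v z₁ z₁ := le_neg_of_hasDerivWithinAt_Iio_of_ae_le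
        (f := fun r ↦ (1 + r) / 6 * c) hg.hasDerivWithinAt (by fun_prop) hlower
    _ ≤ ‖fderiv ℝ v z₁ z₁‖ := neg_le_abs _
    _ ≤ ‖fderiv ℝ v z₁‖ * ‖z₁‖ := (fderiv ℝ v z₁).le_opNorm z₁
    _ = ‖fderiv ℝ v z₁‖ := by rw [hz₁, mul_one]
end

section
/- (Proposition 1) Let n ≥ 1, let f₀, …, f_n : ℂ → ℂ be entire functions, and let z₁ ∈ ℂ. Suppose there are indices m ≠ k in {0, …, n} such that |f_m(z₁)| = |f_k(z₁)| ≥ |f_j(z₁)| for all j ∈ {0, …, n}, and f_m(z₁) ≠ 0. Then ‖f′‖(z₁) ≥ (n+1)^{-1} |f_m′(z₁)/f_m(z₁) − f_k′(z₁)/f_k(z₁)|. -/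
open MeasureTheory Filter Metric

/-- The Fubini–Study derivative of the holomorphic curve with homogeneous
representation `f : Fin (n+1) → ℂ → ℂ`. -/
noncomputable def fsDeriv {n : ℕ} (f : Fin (n + 1) → ℂ → ℂ) (z : ℂ) : ℝ :=
  (∑ j, ‖f j z‖ ^ 2)⁻¹ *
    Real.sqrt (∑ i : Fin (n + 1), ∑ j : Fin (n + 1),
      if i < j then ‖deriv (f i) z * f j z - f i z * deriv (f j) z‖ ^ 2 else 0)

/-!
Put `W = f_m′ f_k − f_m f_k′` at `z₁`. Since `|f_m| = |f_k|`, the difference of logarithmic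
derivatives has modulus `|W| / |f_m|²`. The pair `{m, k}` contributes `|W|²` to the sum
defining `‖f′‖`, and maximality of `|f_m|` gives `Σ_j |f_j|² ≤ (n + 1) |f_m|²`.
-/

lemma norm_div_sub_div_of_norm_eq {𝕜 : Type*} [NormedField 𝕜] {a b c d : 𝕜}
    (hb : b ≠ 0) (hd : d ≠ 0) (hbd : ‖b‖ = ‖d‖) :
    ‖a / b - c / d‖ = ‖a * d - b * c‖ / ‖b‖ ^ 2 := by
  rw [div_sub_div _ _ hb hd, norm_div, norm_mul, ← hbd, sq]

lemma norm_mul_sub_mul_comm {R : Type*} [SeminormedCommRing R] (a b c d : R) :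
    ‖a * d - b * c‖ = ‖c * b - d * a‖ := by
  rw [norm_sub_rev, mul_comm a, mul_comm b]

lemma le_sum_sum_ite_lt {ι : Type*} [Fintype ι] [LinearOrder ι] {F : ι → ι → ℝ}
    (hF : ∀ i j, 0 ≤ F i j) (hsymm : ∀ i j, F i j = F j i) {i j : ι} (hij : i ≠ j) :
    F i j ≤ ∑ a, ∑ b, if a < b then F a b else 0 := by
  wlog hlt : i < j generalizing i j
  · rw [hsymm]
    exact this hij.symm (hij.lt_or_gt.resolve_left hlt)
  have hterm : ∀ a b, 0 ≤ if a < b then F a b else 0 := fun a b => by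
    split_ifs
    exacts [hF a b, le_rfl]
  calc F i j = if i < j then F i j else 0 := (if_pos hlt).symm
    _ ≤ ∑ b, if i < b then F i b else 0 :=
      Finset.single_le_sum (fun b _ => hterm i b) (Finset.mem_univ j)
    _ ≤ ∑ a, ∑ b, if a < b then F a b else 0 :=
      Finset.single_le_sum (f := fun a => ∑ b, if a < b then F a b else 0)
        (fun a _ => Finset.sum_nonneg fun b _ => hterm a b) (Finset.mem_univ i)

theorem fsDeriv_ge_log_gradient_diff_general {n : ℕ}
    (f : Fin (n + 1) → ℂ → ℂ)
    (z₁ : ℂ) (m k : Fin (n + 1)) (hmk : m ≠ k)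
    (heq : ‖f m z₁‖ = ‖f k z₁‖)
    (hmax : ∀ j, ‖f j z₁‖ ≤ ‖f m z₁‖)
    (hne : f m z₁ ≠ 0) :
    ((n : ℝ) + 1)⁻¹ *
        ‖deriv (f m) z₁ / f m z₁ - deriv (f k) z₁ / f k z₁‖ ≤ fsDeriv f z₁ := by
  have hk : f k z₁ ≠ 0 := norm_ne_zero_iff.mp (heq ▸ norm_ne_zero_iff.mpr hne)
  set W := deriv (f m) z₁ * f k z₁ - f m z₁ * deriv (f k) z₁
  set S := ∑ j, ‖f j z₁‖ ^ 2
  set T := ∑ i : Fin (n + 1), ∑ j : Fin (n + 1),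
    if i < j then ‖deriv (f i) z₁ * f j z₁ - f i z₁ * deriv (f j) z₁‖ ^ 2 else 0
  have hS_pos : 0 < S :=
    Finset.sum_pos' (fun j _ => by positivity) ⟨m, Finset.mem_univ m, by positivity⟩
  have hS_le : S ≤ ((n : ℝ) + 1) * ‖f m z₁‖ ^ 2 := by
    simpa using Finset.sum_le_card_nsmul Finset.univ _ _
      fun j _ => pow_le_pow_left₀ (norm_nonneg _) (hmax j) 2
  have hW : ‖W‖ ≤ Real.sqrt T :=
    Real.le_sqrt_of_sq_le <| le_sum_sum_ite_lt
      (F := fun i j => ‖deriv (f i) z₁ * f j z₁ - f i z₁ * deriv (f j) z₁‖ ^ 2)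
      (fun _ _ => sq_nonneg _) (fun i j => by rw [norm_mul_sub_mul_comm]) hmk
  rw [fsDeriv, norm_div_sub_div_of_norm_eq hne hk heq]
  calc ((n : ℝ) + 1)⁻¹ * (‖W‖ / ‖f m z₁‖ ^ 2)
      = ‖W‖ / (((n : ℝ) + 1) * ‖f m z₁‖ ^ 2) := by field_simp
    _ ≤ Real.sqrt T / S := div_le_div₀ (Real.sqrt_nonneg _) hW hS_pos hS_le
    _ = S⁻¹ * Real.sqrt T := by rw [div_eq_inv_mul]

/-- Proposition 1: if at a point `z₁` two of the moduli `|f_m(z₁)| = |f_k(z₁)|` (with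
`m ≠ k`) are maximal among `|f_j(z₁)|`, `0 ≤ j ≤ n`, and nonzero, then
`‖f′‖(z₁) ≥ (n+1)⁻¹ |f_m′(z₁)/f_m(z₁) − f_k′(z₁)/f_k(z₁)|`. -/
theorem fsDeriv_ge_log_gradient_diff {n : ℕ} (hn : 1 ≤ n)
    (f : Fin (n + 1) → ℂ → ℂ) (hf : ∀ j, Differentiable ℂ (f j))
    (z₁ : ℂ) (m k : Fin (n + 1)) (hmk : m ≠ k)
    (heq : ‖f m z₁‖ = ‖f k z₁‖)
    (hmax : ∀ j, ‖f j z₁‖ ≤ ‖f m z₁‖)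
    (hne : f m z₁ ≠ 0) :
    ((n : ℝ) + 1)⁻¹ *
        ‖deriv (f m) z₁ / f m z₁ - deriv (f k) z₁ / f k z₁‖ ≤ fsDeriv f z₁ :=
  fsDeriv_ge_log_gradient_diff_general f z₁ m k hmk heq hmax hne
end

section
/- Let n ≥ 1 and let f₀, …, f_n : ℂ → ℂ be entire functions with no common zero. Then the function u(z) = log(Σ_{j=0}^n |f_j(z)|²)^{1/2} is smooth on ℂ and its Laplacian satisfies Δu(z) = 2‖f′‖²(z) for every z ∈ ℂ, where Δ = ∂²/∂x² + ∂²/∂y². -/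
open Complex Finset

private lemma lagrange_identity {n : ℕ} (a b : Fin (n + 1) → ℂ) :
    (∑ i : Fin (n + 1), ∑ j : Fin (n + 1),
        if i < j then Complex.normSq (a i * b j - b i * a j) else 0)
      = (∑ j, Complex.normSq (a j)) * (∑ j, Complex.normSq (b j))
        - Complex.normSq (∑ j, (starRingEnd ℂ) (b j) * a j) := by
  set w : Fin (n + 1) → Fin (n + 1) → ℝ := fun i j => Complex.normSq (a i * b j - b i * a j)
    with hw
  have hsym : ∀ i j, w i j = w j i := by
    intro i j
    simp only [hw]
    rw [show a i * b j - b i * a j = -(a j * b i - b j * a i) by ring, Complex.normSq_neg]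
  have hdiag : ∀ i, w i i = 0 := by
    intro i; simp only [hw]; rw [show a i * b i - b i * a i = 0 by ring]; simp
  have hdouble : 2 * (∑ i, ∑ j, if i < j then w i j else 0) = ∑ i, ∑ j, w i j := by
    have h1 : (∑ i, ∑ j, if i < j then w i j else 0)
        = ∑ i, ∑ j, if j < i then w i j else 0 := by
      rw [Finset.sum_comm]
      refine Finset.sum_congr rfl fun i _ => Finset.sum_congr rfl fun j _ => ?_
      simp [hsym i j]
    rw [two_mul]
    nth_rewrite 2 [h1]
    rw [← Finset.sum_add_distrib]
    refine Finset.sum_congr rfl fun i _ => ?_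
    rw [← Finset.sum_add_distrib]
    refine Finset.sum_congr rfl fun j _ => ?_
    rcases lt_trichotomy i j with h | h | h
    · simp [h, not_lt_of_gt h]
    · simp [h, hdiag]
    · simp [h, not_lt_of_gt h]
  have hfull : ∑ i, ∑ j, w i j
      = 2 * ((∑ j, Complex.normSq (a j)) * (∑ j, Complex.normSq (b j))
          - Complex.normSq (∑ j, (starRingEnd ℂ) (b j) * a j)) := by
    have hterm : ∀ i j, w i j = Complex.normSq (a i) * Complex.normSq (b j)
        + Complex.normSq (b i) * Complex.normSq (a j)
        - 2 * (((starRingEnd ℂ) (b i) * a i) * (b j * (starRingEnd ℂ) (a j))).re := by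
      intro i j
      have harg : a i * b j * (starRingEnd ℂ) (b i * a j)
          = ((starRingEnd ℂ) (b i) * a i) * (b j * (starRingEnd ℂ) (a j)) := by
        rw [map_mul]; ring
      rw [hw]
      simp only
      rw [Complex.normSq_sub, Complex.normSq_mul, Complex.normSq_mul, harg]
    have hg : Complex.normSq (∑ j, (starRingEnd ℂ) (b j) * a j)
        = ((∑ i, (starRingEnd ℂ) (b i) * a i) * (∑ j, b j * (starRingEnd ℂ) (a j))).re := by
      have : (∑ j, b j * (starRingEnd ℂ) (a j))
          = (starRingEnd ℂ) (∑ j, (starRingEnd ℂ) (b j) * a j) := by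
        rw [map_sum]
        refine Finset.sum_congr rfl fun j _ => ?_
        rw [map_mul, RingHomCompTriple.comp_apply]
        · ring_nf
          simp [mul_comm]
      rw [this, Complex.mul_conj, Complex.ofReal_re]
    calc ∑ i, ∑ j, w i j
        = ∑ i, ∑ j, (Complex.normSq (a i) * Complex.normSq (b j)
            + Complex.normSq (b i) * Complex.normSq (a j)
            - 2 * (((starRingEnd ℂ) (b i) * a i) * (b j * (starRingEnd ℂ) (a j))).re) := by
          exact Finset.sum_congr rfl fun i _ => Finset.sum_congr rfl fun j _ => hterm i j
      _ = 2 * ((∑ j, Complex.normSq (a j)) * (∑ j, Complex.normSq (b j)))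
            - 2 * ((∑ i, (starRingEnd ℂ) (b i) * a i) * (∑ j, b j * (starRingEnd ℂ) (a j))).re := by
          simp only [Finset.sum_sub_distrib, Finset.sum_add_distrib, ← Finset.sum_mul,
            ← Finset.mul_sum, ← Complex.re_sum]
          ring
      _ = _ := by rw [hg]; ring
  linarith

open Complex Finset

private noncomputable def mulC (a : ℂ) : ℂ →L[ℝ] ℂ :=
  ((ContinuousLinearMap.mul ℂ ℂ) a).restrictScalars ℝ

@[simp] private lemma mulC_apply (a v : ℂ) : mulC a v = a * v := rfl

private noncomputable def mulRe (a : ℂ) : ℂ →L[ℝ] ℝ :=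
  Complex.reCLM.comp (mulC a)

@[simp] private lemma mulRe_apply (a v : ℂ) : mulRe a v = (a * v).re := rfl

private lemma hasFDerivAt_S {n : ℕ} (f : Fin (n + 1) → ℂ → ℂ)
    (hf : ∀ j, Differentiable ℂ (f j)) (z : ℂ) :
    HasFDerivAt (fun w => ∑ j, Complex.normSq (f j w))
      ((2 : ℝ) • mulRe (∑ j, (starRingEnd ℂ) (f j z) * deriv (f j) z)) z := by
  have key : ∀ j : Fin (n + 1), HasFDerivAt (fun w => Complex.normSq (f j w))
      ((2 : ℝ) • mulRe ((starRingEnd ℂ) (f j z) * deriv (f j) z)) z := by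
    intro j
    have hfd : HasFDerivAt (f j)
        (((1 : ℂ →L[ℂ] ℂ).smulRight (deriv (f j) z)).restrictScalars ℝ) z :=
      ((hf j).differentiableAt.hasDerivAt.hasFDerivAt).restrictScalars ℝ
    have hconj : HasFDerivAt (fun w => (starRingEnd ℂ) (f j w))
        ((Complex.conjCLE : ℂ →L[ℝ] ℂ).comp
          (((1 : ℂ →L[ℂ] ℂ).smulRight (deriv (f j) z)).restrictScalars ℝ)) z :=
      (Complex.conjCLE.hasFDerivAt).comp z hfd
    have hmul := hfd.mul hconj
    have hre := (Complex.reCLM.hasFDerivAt).comp z hmul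
    have heq : (fun w => Complex.normSq (f j w))
        = fun w => Complex.reCLM (f j w * (starRingEnd ℂ) (f j w)) := by
      funext w
      simp [Complex.mul_conj]
    rw [heq]
    refine hre.congr_fderiv (Eq.symm ?_)
    ext v
    simp [Complex.mul_re, Complex.mul_im]
    ring
  have hsum := HasFDerivAt.fun_sum (fun j (_ : j ∈ Finset.univ) => key j)
  refine hsum.congr_fderiv (Eq.symm ?_)
  ext v
  simp [Complex.re_sum, Finset.sum_mul, Finset.mul_sum]
  rw [← Finset.sum_sub_distrib, Finset.mul_sum]

private lemma hasFDerivAt_u {n : ℕ} (f : Fin (n + 1) → ℂ → ℂ)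
    (hf : ∀ j, Differentiable ℂ (f j)) (hnc : ∀ z : ℂ, ∃ j, f j z ≠ 0) (z : ℂ) :
    HasFDerivAt (fun w => Real.log (Real.sqrt (∑ j, Complex.normSq (f j w))))
      ((∑ j, Complex.normSq (f j z))⁻¹ •
        mulRe (∑ j, (starRingEnd ℂ) (f j z) * deriv (f j) z)) z := by
  have hpos : ∀ w : ℂ, 0 < ∑ j, Complex.normSq (f j w) := by
    intro w
    obtain ⟨j, hj⟩ := hnc w
    exact Finset.sum_pos' (fun i _ => Complex.normSq_nonneg _)
      ⟨j, Finset.mem_univ j, Complex.normSq_pos.mpr hj⟩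
  have heq : (fun w => Real.log (Real.sqrt (∑ j, Complex.normSq (f j w))))
      = fun w => (1 / 2 : ℝ) * Real.log (∑ j, Complex.normSq (f j w)) := by
    funext w
    rw [Real.log_sqrt (hpos w).le]
    ring
  rw [heq]
  have h := ((hasFDerivAt_S f hf z).log (hpos z).ne').const_mul (1 / 2 : ℝ)
  refine h.congr_fderiv (Eq.symm ?_)
  ext v
  simp
  ring

private lemma hasFDerivAt_g {n : ℕ} (f : Fin (n + 1) → ℂ → ℂ)
    (hf : ∀ j, Differentiable ℂ (f j)) (z : ℂ) :
    HasFDerivAt (fun w => ∑ j, (starRingEnd ℂ) (f j w) * deriv (f j) w)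
      ((mulC (∑ j, (starRingEnd ℂ) (deriv (f j) z) * deriv (f j) z)).comp
          (Complex.conjCLE : ℂ →L[ℝ] ℂ)
        + mulC (∑ j, (starRingEnd ℂ) (f j z) * deriv (deriv (f j)) z)) z := by
  have hd1 : ∀ j, Differentiable ℂ (deriv (f j)) := fun j =>
    (contDiff_infty_iff_deriv.mp ((hf j).contDiff)).2.differentiable (by simp)
  have key : ∀ j : Fin (n + 1),
      HasFDerivAt (fun w => (starRingEnd ℂ) (f j w) * deriv (f j) w)
        ((mulC ((starRingEnd ℂ) (deriv (f j) z) * deriv (f j) z)).comp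
            (Complex.conjCLE : ℂ →L[ℝ] ℂ)
          + mulC ((starRingEnd ℂ) (f j z) * deriv (deriv (f j)) z)) z := by
    intro j
    have hfd : HasFDerivAt (f j)
        (((1 : ℂ →L[ℂ] ℂ).smulRight (deriv (f j) z)).restrictScalars ℝ) z :=
      ((hf j).differentiableAt.hasDerivAt.hasFDerivAt).restrictScalars ℝ
    have hconj : HasFDerivAt (fun w => (starRingEnd ℂ) (f j w))
        ((Complex.conjCLE : ℂ →L[ℝ] ℂ).comp
          (((1 : ℂ →L[ℂ] ℂ).smulRight (deriv (f j) z)).restrictScalars ℝ)) z :=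
      (Complex.conjCLE.hasFDerivAt).comp z hfd
    have hfd2 : HasFDerivAt (deriv (f j))
        (((1 : ℂ →L[ℂ] ℂ).smulRight (deriv (deriv (f j)) z)).restrictScalars ℝ) z :=
      ((hd1 j).differentiableAt.hasDerivAt.hasFDerivAt).restrictScalars ℝ
    have hmul := hconj.mul hfd2
    refine hmul.congr_fderiv (Eq.symm ?_)
    ext v
    simp [Complex.ext_iff, Complex.mul_re, Complex.mul_im]
    constructor <;> ring
  have hsum := HasFDerivAt.fun_sum (fun j (_ : j ∈ Finset.univ) => key j)
  refine hsum.congr_fderiv (Eq.symm ?_)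
  ext v
  simp [Complex.ext_iff, Finset.sum_mul, Complex.re_sum, Complex.im_sum,
    Finset.sum_add_distrib, Finset.sum_sub_distrib]

private lemma second_deriv {n : ℕ} (f : Fin (n + 1) → ℂ → ℂ)
    (hf : ∀ j, Differentiable ℂ (f j)) (hnc : ∀ z : ℂ, ∃ j, f j z ≠ 0) (v z : ℂ) :
    fderiv ℝ (fun w : ℂ =>
        fderiv ℝ (fun x : ℂ => Real.log (Real.sqrt (∑ j, Complex.normSq (f j x)))) w v) z v
      = (∑ j, Complex.normSq (f j z))⁻¹ *
          (((∑ j, (starRingEnd ℂ) (deriv (f j) z) * deriv (f j) z) * (starRingEnd ℂ) v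
            + (∑ j, (starRingEnd ℂ) (f j z) * deriv (deriv (f j)) z) * v) * v).re
        - ((∑ j, Complex.normSq (f j z)) ^ 2)⁻¹ *
            (2 * (((∑ j, (starRingEnd ℂ) (f j z) * deriv (f j) z) * v).re) ^ 2) := by
  have hpos : ∀ w : ℂ, 0 < ∑ j, Complex.normSq (f j w) := by
    intro w
    obtain ⟨j, hj⟩ := hnc w
    exact Finset.sum_pos' (fun i _ => Complex.normSq_nonneg _)
      ⟨j, Finset.mem_univ j, Complex.normSq_pos.mpr hj⟩
  have step1 : (fun w : ℂ =>
        fderiv ℝ (fun x => Real.log (Real.sqrt (∑ j, Complex.normSq (f j x)))) w v)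
      = fun w => (∑ j, Complex.normSq (f j w))⁻¹ *
          ((∑ j, (starRingEnd ℂ) (f j w) * deriv (f j) w) * v).re := by
    funext w
    rw [(hasFDerivAt_u f hf hnc w).fderiv]
    simp
  rw [step1]
  have hinv : HasFDerivAt (fun w => (∑ j, Complex.normSq (f j w))⁻¹)
      ((-(((∑ j, Complex.normSq (f j z)) ^ 2)⁻¹)) •
        ((2 : ℝ) • mulRe (∑ j, (starRingEnd ℂ) (f j z) * deriv (f j) z))) z :=
    (hasDerivAt_inv (hpos z).ne').comp_hasFDerivAt z (hasFDerivAt_S f hf z)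
  have hre : HasFDerivAt
      (fun w => ((∑ j, (starRingEnd ℂ) (f j w) * deriv (f j) w) * v).re)
      ((mulRe v).comp
        ((mulC (∑ j, (starRingEnd ℂ) (deriv (f j) z) * deriv (f j) z)).comp
            (Complex.conjCLE : ℂ →L[ℝ] ℂ)
          + mulC (∑ j, (starRingEnd ℂ) (f j z) * deriv (deriv (f j)) z))) z := by
    have h := ((mulRe v).hasFDerivAt).comp z (hasFDerivAt_g f hf z)
    exact h.congr_of_eventuallyEq (Filter.Eventually.of_forall fun w => by
      simp [mul_comm, Finset.mul_sum])
  have hmul := hinv.fun_mul hre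
  rw [hmul.fderiv]
  simp [Complex.mul_re, Complex.mul_im]
  ring

open MeasureTheory Filter Metric

/-- `u = log ‖f‖` is smooth and `Δu = 2 ‖f′‖²`, where the Laplacian
`Δ = ∂²/∂x² + ∂²/∂y²` is expressed via second derivatives in the directions
`1` and `I`. -/
theorem laplacian_log_norm {n : ℕ} (hn : 1 ≤ n) (f : Fin (n + 1) → ℂ → ℂ)
    (hf : ∀ j, Differentiable ℂ (f j)) (hnc : ∀ z : ℂ, ∃ j, f j z ≠ 0) :
    ContDiff ℝ (⊤ : ℕ∞) (fun z : ℂ => Real.log (Real.sqrt (∑ j, ‖f j z‖ ^ 2))) ∧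
    ∀ z : ℂ,
      (fderiv ℝ (fun w : ℂ =>
          fderiv ℝ (fun x : ℂ => Real.log (Real.sqrt (∑ j, ‖f j x‖ ^ 2))) w 1) z) 1
      + (fderiv ℝ (fun w : ℂ =>
          fderiv ℝ (fun x : ℂ => Real.log (Real.sqrt (∑ j, ‖f j x‖ ^ 2))) w
            Complex.I) z) Complex.I
      = 2 * (fsDeriv f z) ^ 2 := by
  have hpos : ∀ w : ℂ, 0 < ∑ j, Complex.normSq (f j w) := by
    intro w
    obtain ⟨j, hj⟩ := hnc w
    exact Finset.sum_pos' (fun i _ => Complex.normSq_nonneg _)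
      ⟨j, Finset.mem_univ j, Complex.normSq_pos.mpr hj⟩
  have habs : ∀ w : ℂ, (∑ j, ‖f j w‖ ^ 2) = ∑ j, Complex.normSq (f j w) :=
    fun w => Finset.sum_congr rfl fun j _ => Complex.sq_norm _
  have hfun : (fun x : ℂ => Real.log (Real.sqrt (∑ j, ‖f j x‖ ^ 2)))
      = fun x => Real.log (Real.sqrt (∑ j, Complex.normSq (f j x))) := by
    funext x; rw [habs]
  constructor
  · rw [hfun]
    have hS : ContDiff ℝ (⊤ : ℕ∞) (fun z : ℂ => ∑ j, Complex.normSq (f j z)) := by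
      apply ContDiff.sum
      intro j _
      have h1 : ContDiff ℝ (⊤ : ℕ∞) (f j) := ((hf j).contDiff).restrict_scalars ℝ
      have h2 : ContDiff ℝ (⊤ : ℕ∞) (fun z : ℂ => (starRingEnd ℂ) (f j z)) :=
        (Complex.conjCLE : ℂ →L[ℝ] ℂ).contDiff.comp h1
      have h3 := h1.mul h2
      have heq : (fun z : ℂ => Complex.normSq (f j z))
          = fun z : ℂ => Complex.reCLM (f j z * (starRingEnd ℂ) (f j z)) := by
        funext w
        simp [Complex.mul_conj]
      rw [heq]
      exact Complex.reCLM.contDiff.comp h3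
    exact (hS.sqrt fun w => (hpos w).ne').log fun w => (Real.sqrt_pos.mpr (hpos w)).ne'
  · intro z
    rw [hfun, second_deriv f hf hnc 1 z, second_deriv f hf hnc Complex.I z]
    have hA : (∑ j, (starRingEnd ℂ) (deriv (f j) z) * deriv (f j) z).re
        = ∑ j, Complex.normSq (deriv (f j) z) := by
      rw [Complex.re_sum]
      exact Finset.sum_congr rfl fun j _ => by
        rw [mul_comm, Complex.mul_conj, Complex.ofReal_re]
    have hQ : (∑ i : Fin (n + 1), ∑ j : Fin (n + 1), if i < j then
          ‖deriv (f i) z * f j z - f i z * deriv (f j) z‖ ^ 2 else 0)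
        = (∑ j, Complex.normSq (deriv (f j) z)) * (∑ j, Complex.normSq (f j z))
          - Complex.normSq (∑ j, (starRingEnd ℂ) (f j z) * deriv (f j) z) := by
      rw [← lagrange_identity (fun j => deriv (f j) z) (fun j => f j z)]
      exact Finset.sum_congr rfl fun i _ => Finset.sum_congr rfl fun j _ => by
        split <;> simp [Complex.sq_norm]
    have hQnn : (0 : ℝ) ≤ ∑ i : Fin (n + 1), ∑ j : Fin (n + 1), if i < j then
          ‖deriv (f i) z * f j z - f i z * deriv (f j) z‖ ^ 2 else 0 :=
      Finset.sum_nonneg fun i _ => Finset.sum_nonneg fun j _ => by positivity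
    simp only [fsDeriv]
    rw [habs z, mul_pow, Real.sq_sqrt hQnn, hQ]
    have hSne : (∑ j, Complex.normSq (f j z)) ≠ 0 := (hpos z).ne'
    set S : ℝ := ∑ j, Complex.normSq (f j z) with hSdef
    set A2 : ℝ := ∑ j, Complex.normSq (deriv (f j) z) with hA2def
    set Ac : ℂ := ∑ j, (starRingEnd ℂ) (deriv (f j) z) * deriv (f j) z with hAcdef
    set T : ℂ := ∑ j, (starRingEnd ℂ) (f j z) * deriv (deriv (f j)) z with hTdef
    set g : ℂ := ∑ j, (starRingEnd ℂ) (f j z) * deriv (f j) z with hgdef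
    simp only [map_one, mul_one, Complex.one_re, Complex.one_im, Complex.conj_I,
      Complex.mul_re, Complex.mul_im, Complex.I_re, Complex.I_im, Complex.add_re,
      Complex.add_im, Complex.neg_re, Complex.neg_im, Complex.normSq_apply, hA]
    field_simp
    ring
end
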